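/- arXiv:1909.10558 — 2 statements merged into one kernel-verified Lean document; each statement's English description precedes it below -/
import Mathlib

section
/- Let Ω be the torus (R/R₀Z)^d, V ∈ L^∞(Ω) with V ≥ 0, and let u ∈ W^{1,2}(Ω) solve -Δu + Vu = 1 with periodic boundary conditions. Then for every periodic f ∈ W^{1,2}(Ω): ∫_Ω |∇f|² + V f² dx = ∫_Ω u² |∇(f/u)|² + (1/u) f² dx. -/
open MeasureTheory Set

/-- Pointwise Laplacian of `u : ℝ^d → ℝ`. -/
noncomputable def lap {d : ℕ} (u : EuclideanSpace ℝ (Fin d) → ℝ)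
    (x : EuclideanSpace ℝ (Fin d)) : ℝ :=
  ∑ i : Fin d, fderiv ℝ (fun y => fderiv ℝ u y (EuclideanSpace.single i 1)) x
    (EuclideanSpace.single i 1)

/-- Periodicity with respect to the lattice `R₀ ℤ^d`. -/
def IsPeriodic {d : ℕ} (R₀ : ℝ) (f : EuclideanSpace ℝ (Fin d) → ℝ) : Prop :=
  ∀ (x : EuclideanSpace ℝ (Fin d)) (i : Fin d),
    f (x + R₀ • EuclideanSpace.single i 1) = f x

/-- A fundamental domain `[0,R₀)^d` of the torus `(ℝ/R₀ℤ)^d`. -/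
def fund (d : ℕ) (R₀ : ℝ) : Set (EuclideanSpace ℝ (Fin d)) :=
  {x | ∀ i, x i ∈ Ico (0 : ℝ) R₀}

/-
Writing `f = u w`, the product rule gives pointwise
`|∇f|² = u² |∇w|² + ∇u · ∇(f²/u)`, while `div ((f²/u) ∇u) = (f²/u) Δu + ∇u · ∇(f²/u)`
equals `V f² - f²/u + ∇u · ∇(f²/u)` by the landscape equation `-Δu + V u = 1`. Hence the two
integrands differ by the divergence of the periodic field `(f²/u) ∇u`, whose integral over a
period cell vanishes: in the divergence theorem the contributions of opposite faces cancel.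
-/

theorem ContDiff.fderiv_apply_const {E F : Type*} [NormedAddCommGroup E] [NormedSpace ℝ E]
    [NormedAddCommGroup F] [NormedSpace ℝ F] {u : E → F} {n : WithTop ℕ∞}
    (hu : ContDiff ℝ (n + 1) u) (v : E) : ContDiff ℝ n fun y => fderiv ℝ u y v :=
  (hu.fderiv_right le_rfl).clm_apply contDiff_const

theorem ContDiff.continuous_gradient {F : Type*} [NormedAddCommGroup F] [InnerProductSpace ℝ F]
    [CompleteSpace F] {h : F → ℝ} (hh : ContDiff ℝ 1 h) : Continuous (gradient h) :=
  (InnerProductSpace.toDual ℝ F).symm.continuous.comp (hh.continuous_fderiv one_ne_zero)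

theorem continuous_sum_fderiv_apply {ι E F : Type*} [Fintype ι] [NormedAddCommGroup E]
    [NormedSpace ℝ E] [NormedAddCommGroup F] [NormedSpace ℝ F] {φ : ι → E → F}
    (hφ : ∀ i, ContDiff ℝ 1 (φ i)) (v : ι → E) :
    Continuous fun x => ∑ i, fderiv ℝ (φ i) x (v i) :=
  continuous_finsetSum _ fun i _ =>
    ((hφ i).continuous_fderiv one_ne_zero).clm_apply continuous_const

theorem fderiv_apply_sq_eq_ground_state {E : Type*} [NormedAddCommGroup E] [NormedSpace ℝ E]
    {u f : E → ℝ} {x : E} (hu : ∀ y, u y ≠ 0) (hux : DifferentiableAt ℝ u x)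
    (hfx : DifferentiableAt ℝ f x) (v : E) :
    fderiv ℝ f x v ^ 2 = u x ^ 2 * fderiv ℝ (fun y => f y / u y) x v ^ 2 +
      fderiv ℝ u x v * fderiv ℝ (fun y => f y ^ 2 / u y) x v := by
  set w := fun y => f y / u y
  have hwx : DifferentiableAt ℝ w x := by
    simpa only [w, div_eq_mul_inv] using hfx.fun_mul (hux.fun_inv (hu x))
  have hf : f = fun y => u y * w y := funext fun y => (mul_div_cancel₀ (f y) (hu y)).symm
  have hg : (fun y => f y ^ 2 / u y) = fun y => w y * f y :=
    funext fun y => by simp only [w]; ring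
  have hf' : fderiv ℝ f x v = u x * fderiv ℝ w x v + w x * fderiv ℝ u x v := by
    conv_lhs => rw [hf]
    simp [fderiv_fun_mul hux hwx]
  have hg' : fderiv ℝ (fun y => f y ^ 2 / u y) x v =
      w x * fderiv ℝ f x v + f x * fderiv ℝ w x v := by
    simp [hg, fderiv_fun_mul hwx hfx]
  rw [hg', hf', congrFun hf x]
  ring

theorem norm_gradient_sq_eq_sum {d : ℕ} (h : EuclideanSpace ℝ (Fin d) → ℝ)
    (x : EuclideanSpace ℝ (Fin d)) :
    ‖gradient h x‖ ^ 2 = ∑ i, fderiv ℝ h x (EuclideanSpace.single i 1) ^ 2 := by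
  simp [EuclideanSpace.real_norm_sq_eq, ← inner_gradient_left, EuclideanSpace.inner_single_right]

theorem sum_fderiv_mul_fderiv_single_eq_mul_lap_add {d : ℕ} {g u : EuclideanSpace ℝ (Fin d) → ℝ}
    {x : EuclideanSpace ℝ (Fin d)} (hg : DifferentiableAt ℝ g x)
    (hu : ∀ i, DifferentiableAt ℝ (fun y => fderiv ℝ u y (EuclideanSpace.single i 1)) x) :
    ∑ i, fderiv ℝ (fun y => g y * fderiv ℝ u y (EuclideanSpace.single i 1)) x
        (EuclideanSpace.single i 1) =
      g x * lap u x + ∑ i, fderiv ℝ u x (EuclideanSpace.single i 1) *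
        fderiv ℝ g x (EuclideanSpace.single i 1) := by
  rw [lap, Finset.mul_sum, ← Finset.sum_add_distrib]
  refine Finset.sum_congr rfl fun i _ => ?_
  simp [fderiv_fun_mul hg (hu i)]

theorem norm_gradient_sq_add_mul_sq_eq {d : ℕ} {V u f : EuclideanSpace ℝ (Fin d) → ℝ}
    (hu : ContDiff ℝ 2 u) (hf : Differentiable ℝ f) (hu0 : ∀ x, u x ≠ 0)
    {x : EuclideanSpace ℝ (Fin d)} (hux : -lap u x + V x * u x = 1) :
    ‖gradient f x‖ ^ 2 + V x * f x ^ 2 =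
      u x ^ 2 * ‖gradient (fun y => f y / u y) x‖ ^ 2 + f x ^ 2 / u x +
        ∑ i, fderiv ℝ (fun y => f y ^ 2 / u y * fderiv ℝ u y (EuclideanSpace.single i 1)) x
          (EuclideanSpace.single i 1) := by
  have hud : Differentiable ℝ u := hu.differentiable two_ne_zero
  rw [norm_gradient_sq_eq_sum, norm_gradient_sq_eq_sum,
    sum_fderiv_mul_fderiv_single_eq_mul_lap_add
      (by simpa only [div_eq_mul_inv, Pi.pow_apply] using
        ((hf x).pow 2).fun_mul ((hud x).fun_inv (hu0 x)))
      fun i => ((hu.fderiv_apply_const _).differentiable one_ne_zero) x]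
  simp only [fderiv_apply_sq_eq_ground_state hu0 (hud x) (hf x), Finset.sum_add_distrib,
    Finset.mul_sum]
  have hlap : lap u x = V x * u x - 1 := by linarith
  rw [hlap]
  field_simp [hu0 x]
  ring

theorem IsPeriodic.fderiv_apply {d : ℕ} {R₀ : ℝ} {h : EuclideanSpace ℝ (Fin d) → ℝ}
    (hh : IsPeriodic R₀ h) (v : EuclideanSpace ℝ (Fin d)) :
    IsPeriodic R₀ fun y => fderiv ℝ h y v := fun x i => by
  simp only [← fderiv_comp_add_right, hh _ i]

theorem fund_eq_preimage (d : ℕ) (R₀ : ℝ) :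
    fund d R₀ = WithLp.ofLp ⁻¹' univ.pi fun _ => Ico 0 R₀ := by
  ext x
  simp [fund]

theorem Continuous.integrableOn_fund {d : ℕ} {R₀ : ℝ} {h : EuclideanSpace ℝ (Fin d) → ℝ}
    (hh : Continuous h) : IntegrableOn h (fund d R₀) := by
  rw [fund_eq_preimage]
  refine (hh.continuousOn.integrableOn_compact ?_).mono_set
    (preimage_mono (pi_mono fun _ _ => Ico_subset_Icc_self))
  exact (PiLp.homeomorph 2 fun _ : Fin d => ℝ).isCompact_preimage.2
    (isCompact_univ_pi fun _ => isCompact_Icc)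

theorem integral_Icc_sum_fderiv_eq_zero_of_periodic {d : ℕ} {R₀ : ℝ}
    (ψ : Fin d → (Fin d → ℝ) → ℝ) (hψ : ∀ i, ContDiff ℝ 1 (ψ i))
    (hper : ∀ i x, ψ i (x + Pi.single i R₀) = ψ i x) :
    ∫ x in Icc 0 (fun _ => R₀), ∑ i, fderiv ℝ (ψ i) x (Pi.single i 1) = 0 := by
  cases d with
  | zero => simp
  | succ n =>
  rcases lt_or_ge R₀ 0 with hR | hR
  · rw [Icc_eq_empty fun h : (0 : Fin (n + 1) → ℝ) ≤ fun _ => R₀ => hR.not_ge (h 0),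
      setIntegral_empty]
  rw [integral_divergence_of_hasFDerivAt_off_countable' 0 (fun _ => R₀) (fun _ => hR) ψ
    (fun i => fderiv ℝ (ψ i)) ∅ countable_empty (fun i => (hψ i).continuous.continuousOn)
    (fun x _ i => ((hψ i).differentiable one_ne_zero x).hasFDerivAt)
    ((continuous_sum_fderiv_apply hψ _).continuousOn.integrableOn_compact isCompact_Icc)]
  refine Finset.sum_eq_zero fun i _ => ?_
  simp only [sub_eq_zero]
  refine setIntegral_congr_fun measurableSet_Icc fun y _ => ?_
  have hface : i.insertNth R₀ y =
      i.insertNth ((0 : Fin (n + 1) → ℝ) i) y + Pi.single (M := fun _ => ℝ) i R₀ := by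
    rw [← Fin.insertNth_zero_right, ← Fin.insertNth_add, Pi.zero_apply, zero_add, add_zero]
  simp only [hface, hper]

theorem integral_fund_sum_fderiv_eq_zero_of_periodic {d : ℕ} {R₀ : ℝ}
    (φ : Fin d → EuclideanSpace ℝ (Fin d) → ℝ) (hφ : ∀ i, ContDiff ℝ 1 (φ i))
    (hper : ∀ i, IsPeriodic R₀ (φ i)) :
    ∫ x in fund d R₀, ∑ i, fderiv ℝ (φ i) x (EuclideanSpace.single i 1) = 0 := by
  let e := (EuclideanSpace.equiv (Fin d) ℝ).symm
  have hψ : ∀ i, ContDiff ℝ 1 (φ i ∘ e) := fun i => (hφ i).comp e.contDiff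
  have hψper : ∀ i x, (φ i ∘ e) (x + Pi.single i R₀) = (φ i ∘ e) x := fun i x => by
    have hsingle : Pi.single i R₀ = R₀ • Pi.single i (1 : ℝ) := by
      rw [← Pi.single_smul, smul_eq_mul, mul_one]
    simpa [e, hsingle] using hper i (e x) i
  calc ∫ x in fund d R₀, ∑ i, fderiv ℝ (φ i) x (EuclideanSpace.single i 1)
      = ∫ y in univ.pi fun _ => Ico 0 R₀, ∑ i, fderiv ℝ (φ i) (e y) (e (Pi.single i 1)) := by
        rw [fund_eq_preimage]
        exact (PiLp.volume_preserving_ofLp (Fin d)).setIntegral_preimage_emb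
          (MeasurableEquiv.toLp 2 _).symm.measurableEmbedding
            (fun y => ∑ i, fderiv ℝ (φ i) (e y) (e (Pi.single i 1))) _
    _ = ∫ y in Icc 0 fun _ => R₀, ∑ i, fderiv ℝ (φ i ∘ e) y (Pi.single i 1) := by
        rw [setIntegral_congr_set (by rw [volume_pi]; exact Measure.univ_pi_Ico_ae_eq_Icc)]
        simp only [e.comp_right_fderiv]; rfl
    _ = 0 := integral_Icc_sum_fderiv_eq_zero_of_periodic _ hψ hψper

theorem landscape_ground_state_identity_general (d : ℕ) (R₀ : ℕ)
    (V u f : EuclideanSpace ℝ (Fin d) → ℝ)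
    (hu : ContDiff ℝ 2 u) (huper : IsPeriodic (R₀ : ℝ) u) (hupos : ∀ x, 0 < u x)
    (hueq : ∀ x, -lap u x + V x * u x = 1)
    (hf : ContDiff ℝ 1 f) (hfper : IsPeriodic (R₀ : ℝ) f) :
    ∫ x in fund d (R₀ : ℝ), (‖gradient f x‖ ^ 2 + V x * f x ^ 2) =
      ∫ x in fund d (R₀ : ℝ),
        (u x ^ 2 * ‖gradient (fun y => f y / u y) x‖ ^ 2 + f x ^ 2 / u x) := by
  have hu0 : ∀ x, u x ≠ 0 := fun x => (hupos x).ne'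
  have hu1 : ContDiff ℝ 1 u := hu.of_le one_le_two
  set φ : Fin d → EuclideanSpace ℝ (Fin d) → ℝ :=
    fun i y => f y ^ 2 / u y * fderiv ℝ u y (EuclideanSpace.single i 1)
  have hφ : ∀ i, ContDiff ℝ 1 (φ i) := fun i =>
    ((hf.pow 2).div hu1 hu0).mul (hu.fderiv_apply_const _)
  have hφper : ∀ i, IsPeriodic R₀ (φ i) := fun i x j => by
    simp only [φ, hfper x j, huper x j, huper.fderiv_apply _ x j]
  have hrhs :
      Continuous fun x => u x ^ 2 * ‖gradient (fun y => f y / u y) x‖ ^ 2 + f x ^ 2 / u x :=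
    ((hu1.continuous.pow 2).mul ((hf.div hu1 hu0).continuous_gradient.norm.pow 2)).add
      ((hf.continuous.pow 2).div hu1.continuous hu0)
  calc ∫ x in fund d R₀, (‖gradient f x‖ ^ 2 + V x * f x ^ 2)
      = ∫ x in fund d R₀, (u x ^ 2 * ‖gradient (fun y => f y / u y) x‖ ^ 2 + f x ^ 2 / u x +
          ∑ i, fderiv ℝ (φ i) x (EuclideanSpace.single i 1)) := by
        congr with x
        exact norm_gradient_sq_add_mul_sq_eq hu (hf.differentiable one_ne_zero) hu0 (hueq x)
    _ = _ := by
        rw [integral_add hrhs.integrableOn_fund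
            (continuous_sum_fderiv_apply hφ _).integrableOn_fund,
          integral_fund_sum_fderiv_eq_zero_of_periodic φ hφ hφper, add_zero]

/-- ground-state transform identity for the landscape function:
`∫_Ω |∇f|² + V f² = ∫_Ω u² |∇(f/u)|² + f²/u` for periodic `f`. -/
theorem landscape_ground_state_identity (d : ℕ) (hd : 0 < d) (R₀ : ℕ) (hR : 0 < R₀)
    (V u f : EuclideanSpace ℝ (Fin d) → ℝ)
    (hVmeas : Measurable V) (hV0 : ∀ x, 0 ≤ V x) (hVbd : ∃ M, ∀ x, V x ≤ M)
    (hVper : IsPeriodic (R₀ : ℝ) V)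
    (hu : ContDiff ℝ 2 u) (huper : IsPeriodic (R₀ : ℝ) u) (hupos : ∀ x, 0 < u x)
    (hueq : ∀ x, -lap u x + V x * u x = 1)
    (hf : ContDiff ℝ 1 f) (hfper : IsPeriodic (R₀ : ℝ) f) :
    ∫ x in fund d (R₀ : ℝ), (‖gradient f x‖ ^ 2 + V x * f x ^ 2) =
      ∫ x in fund d (R₀ : ℝ),
        (u x ^ 2 * ‖gradient (fun y => f y / u y) x‖ ^ 2 + f x ^ 2 / u x) :=
  landscape_ground_state_identity_general d R₀ V u f hu huper hupos hueq hf hfper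
end

section
/- Let d ≥ 1 and suppose u is continuous on a cube Q with sidelength l, satisfies -Δu ≤ 1 weakly, u ≥ 1, and for every unit subcube R_j of Q the Harnack bound ⨍_{R_j} u dx ≤ C'_H inf_{R_j} u holds. Let m be the average of u over a ball B ⊇ Q of radius r, let J_η be a set of unit subcubes with inf_{R_j} u < η m where η = (2C'_H)^{-1}, and suppose Card J_η ≥ (λ/2)|Q|. Then sup_{B} u ≥ (1 + c₃λ) m for a dimensional constant c₃ > 0. -/
open MeasureTheory Set Metric

/-- The unit cube of the lattice `ℤ^d` with corner `j`. -/
def unitCube {d : ℕ} (j : Fin d → ℤ) : Set (EuclideanSpace ℝ (Fin d)) :=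
  {x | ∀ i, x i ∈ Ico ((j i : ℝ)) ((j i : ℝ) + 1)}

/-- The cube with corner `a` and sidelength `l`. -/
def cornerCube {d : ℕ} (a : Fin d → ℝ) (l : ℝ) : Set (EuclideanSpace ℝ (Fin d)) :=
  {x | ∀ i, x i ∈ Icc (a i) (a i + l)}

/-!
By the Harnack bound, every cube `R_j` with `j ∈ Jη` carries `∫_{R_j} u ≤ C'_H (2C'_H)⁻¹ m = m/2`,
so on their union `X` the function `u` has at most half its `B`-average, while
`|X| = #Jη ≥ (λ/2) lᵈ` is a fixed proportion `≳ λ` of `|B| ≤ ω_d (4√d l)ᵈ`. Removing `X` then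
raises the average: `⨍_{B \ X} u ≥ (1 + |X| / (2|B|)) m`, and `u` attains its average somewhere
on `B \ X`.
-/

open scoped ENNReal

namespace MeasureTheory

variable {α : Type*} [MeasurableSpace α] {μ : Measure α} {s B X : Set α} {f u : α → ℝ}

theorem le_setAverage_of_forall_le {c : ℝ} (hs : MeasurableSet s) (hμ₀ : μ s ≠ 0)
    (hμ : μ s ≠ ∞) (hf : IntegrableOn f s μ) (hc : ∀ x ∈ s, c ≤ f x) :
    c ≤ ⨍ x in s, f x ∂μ := by
  have hpos : 0 < μ.real s := ENNReal.toReal_pos hμ₀ hμ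
  rw [setAverage_eq, smul_eq_mul, le_inv_mul_iff₀ hpos, mul_comm]
  exact setIntegral_ge_of_const_le_real hs hμ hc hf

theorem one_add_div_mul_setAverage_le_setAverage_sdiff (hB : μ B ≠ ∞) (hXB : X ⊆ B)
    (hX : MeasurableSet X) (hu : IntegrableOn u B μ) (hm : 0 < ⨍ x in B, u x ∂μ)
    (hXu : ∫ x in X, u x ∂μ ≤ (⨍ x in B, u x ∂μ) / 2 * μ.real X) :
    (1 + μ.real X / (2 * μ.real B)) * ⨍ x in B, u x ∂μ ≤ ⨍ x in B \ X, u x ∂μ := by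
  set m := ⨍ x in B, u x ∂μ
  have hBpos : 0 < μ.real B := by
    by_contra! h
    have : m = 0 := by simp [m, setAverage_eq, le_antisymm h measureReal_nonneg]
    linarith
  have hintB : ∫ x in B, u x ∂μ = m * μ.real B := by
    simp only [m, setAverage_eq, smul_eq_mul]
    field_simp
  have hsplit : ∫ x in X, u x ∂μ + ∫ x in B \ X, u x ∂μ = ∫ x in B, u x ∂μ := by
    simpa [inter_eq_right.2 hXB] using integral_inter_add_sdiff hX hu
  have hsdiff : μ.real (B \ X) = μ.real B - μ.real X := measureReal_sdiff hXB hX hB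
  have hXleB : μ.real X ≤ μ.real B := measureReal_mono hXB hB
  have hXltB : μ.real X < μ.real B := by
    by_contra! h
    have hnull : μ (B \ X) = 0 :=
      (measureReal_eq_zero_iff (measure_ne_top_of_subset sdiff_subset hB)).1 (by linarith)
    rw [setIntegral_measure_zero u hnull] at hsplit
    nlinarith
  rw [setAverage_eq, hsdiff, smul_eq_mul, le_inv_mul_iff₀ (by linarith)]
  -- `(1 + t/2)(1 - t) ≤ 1 - t/2` with `t = |X|/|B|`
  have hexpand : (1 + μ.real X / (2 * μ.real B)) * m * (μ.real B - μ.real X)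
      = m * (μ.real B - μ.real X / 2) - m * μ.real X ^ 2 / (2 * μ.real B) := by
    field_simp
    ring
  have : 0 ≤ m * μ.real X ^ 2 / (2 * μ.real B) := by positivity
  linarith

theorem exists_one_add_div_mul_setAverage_le (hB : μ B ≠ ∞) (hXB : X ⊆ B)
    (hX : MeasurableSet X) (hu : IntegrableOn u B μ) (hm : 0 < ⨍ x in B, u x ∂μ)
    (hXu : ∫ x in X, u x ∂μ ≤ (⨍ x in B, u x ∂μ) / 2 * μ.real X) :
    ∃ ξ ∈ B \ X, (1 + μ.real X / (2 * μ.real B)) * ⨍ x in B, u x ∂μ ≤ u ξ := by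
  have havg := one_add_div_mul_setAverage_le_setAverage_sdiff hB hXB hX hu hm hXu
  have hne : μ (B \ X) ≠ 0 := by
    intro h
    have : ⨍ x in B \ X, u x ∂μ = 0 := by simp [setAverage_eq, measureReal_def, h]
    have : 0 ≤ μ.real X / (2 * μ.real B) := by positivity
    nlinarith
  obtain ⟨ξ, hξ, hle⟩ := exists_setAverage_le hne (measure_ne_top_of_subset sdiff_subset hB)
    (hu.mono_set sdiff_subset)
  exact ⟨ξ, hξ, havg.trans hle⟩

end MeasureTheory

section

variable {d : ℕ}

theorem measurableSet_unitCube (j : Fin d → ℤ) : MeasurableSet (unitCube j) := by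
  simp only [unitCube, ofPred_forall]
  exact MeasurableSet.iInter fun i =>
    measurableSet_Ico.preimage (EuclideanSpace.proj (𝕜 := ℝ) i).continuous.measurable

theorem volume_unitCube (j : Fin d → ℤ) : volume (unitCube j) = 1 := by
  have h : unitCube j = (MeasurableEquiv.toLp 2 (Fin d → ℝ)).symm ⁻¹'
      (univ.pi fun i => Ico ((j i : ℝ)) ((j i : ℝ) + 1)) := by
    ext x
    simp only [unitCube, mem_Ico, mem_ofPred_eq, MeasurableEquiv.toLp, mem_preimage, mem_pi,
      mem_univ, forall_const]
    rfl
  rw [h, (EuclideanSpace.volume_preserving_symm_measurableEquiv_toLp (Fin d)).measure_preimage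
    (MeasurableSet.univ_pi fun _ => measurableSet_Ico).nullMeasurableSet, volume_pi_pi]
  simp [Real.volume_Ico]

theorem pairwiseDisjoint_unitCube (s : Set (Fin d → ℤ)) : s.PairwiseDisjoint unitCube := by
  intro j _ j' _ hne
  refine disjoint_left.2 fun x hx hx' => hne (funext fun i => ?_)
  have h := hx i
  have h' := hx' i
  simp only [mem_Ico] at h h'
  have e : ⌊x i⌋ = j i := Int.floor_eq_iff.2 ⟨h.1, by exact_mod_cast h.2⟩
  have e' : ⌊x i⌋ = j' i := Int.floor_eq_iff.2 ⟨h'.1, by exact_mod_cast h'.2⟩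
  omega

theorem measurableSet_biUnion_unitCube (s : Finset (Fin d → ℤ)) :
    MeasurableSet (⋃ j ∈ s, unitCube j) :=
  s.measurableSet_biUnion fun j _ => measurableSet_unitCube j

theorem volume_real_biUnion_unitCube (s : Finset (Fin d → ℤ)) :
    volume.real (⋃ j ∈ s, unitCube j) = s.card := by
  rw [measureReal_biUnion_finset (pairwiseDisjoint_unitCube _)
    (fun j _ => measurableSet_unitCube j) fun j _ => by simp [volume_unitCube]]
  simp [measureReal_def, volume_unitCube]

theorem setAverage_unitCube (u : EuclideanSpace ℝ (Fin d) → ℝ) (j : Fin d → ℤ) :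
    ⨍ y in unitCube j, u y = ∫ y in unitCube j, u y := by
  simp [setAverage_eq, measureReal_def, volume_unitCube]

theorem setIntegral_biUnion_unitCube_le {u : EuclideanSpace ℝ (Fin d) → ℝ} {c : ℝ}
    (s : Finset (Fin d → ℤ)) (hu : ∀ j ∈ s, IntegrableOn u (unitCube j))
    (hc : ∀ j ∈ s, ⨍ y in unitCube j, u y ≤ c) :
    ∫ y in ⋃ j ∈ s, unitCube j, u y ≤ c * s.card := by
  rw [integral_biUnion_finset s (fun j _ => measurableSet_unitCube j)
    (pairwiseDisjoint_unitCube _) hu, mul_comm, ← nsmul_eq_mul, ← Finset.sum_const]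
  exact Finset.sum_le_sum fun j hj => setAverage_unitCube u j ▸ hc j hj

theorem volume_real_closedBall_le (x : EuclideanSpace ℝ (Fin d)) {r ρ : ℝ} (hr : 0 ≤ r)
    (hrρ : r ≤ ρ) :
    volume.real (closedBall x r) ≤ ρ ^ d * volume.real (ball (0 : EuclideanSpace ℝ (Fin d)) 1) := by
  rw [Measure.addHaar_real_closedBall volume x hr, finrank_euclideanSpace_fin]
  gcongr

end

/-- Step IV of Lemma 3.4: if a proportion `≥ λ/2` of the unit
subcubes of a cube `Q ⊆ B = closedBall x₀ r` have small infimum of `u`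
(`inf_{R_j} u < η m` with `η = (2C'_H)⁻¹`, `m` the average of `u` over `B`),
and `u` satisfies the unit-scale Harnack bound on each subcube, then
`sup_B u ≥ (1 + c₃ λ) m` for a dimensional constant `c₃ > 0`. -/
theorem sup_ge_of_many_small_cubes (d : ℕ) (hd : 0 < d) :
    ∃ c₃ : ℝ, 0 < c₃ ∧
      ∀ (C'H lam l r : ℝ) (x₀ : EuclideanSpace ℝ (Fin d))
        (u : EuclideanSpace ℝ (Fin d) → ℝ) (a : Fin d → ℝ)
        (J Jη : Finset (Fin d → ℤ)),
        0 < C'H → 0 < lam → lam ≤ 1 → 0 < l → 0 < r →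
        Continuous u → ContDiff ℝ 2 u → (∀ x, -lap u x ≤ 1) → (∀ x, 1 ≤ u x) →
        (∀ j ∈ J, unitCube j ⊆ cornerCube a l) →
        cornerCube a l ⊆ closedBall x₀ r →
        l ≤ r → r ≤ 4 * Real.sqrt d * l →
        (∀ j ∈ J, ∀ x ∈ unitCube j, (⨍ y in unitCube j, u y) ≤ C'H * u x) →
        Jη ⊆ J →
        (∀ j ∈ Jη, ∃ x ∈ unitCube j,
          u x < (2 * C'H)⁻¹ * ⨍ y in closedBall x₀ r, u y) →
        lam / 2 * l ^ d ≤ (Jη.card : ℝ) →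
        ∃ ξ ∈ closedBall x₀ r,
          (1 + c₃ * lam) * (⨍ y in closedBall x₀ r, u y) ≤ u ξ := by
  set ω := volume.real (ball (0 : EuclideanSpace ℝ (Fin d)) 1)
  have hω : 0 < ω :=
    ENNReal.toReal_pos (measure_ball_pos volume 0 one_pos).ne' measure_ball_lt_top.ne
  have hsd : 0 < Real.sqrt d := Real.sqrt_pos.2 (by exact_mod_cast hd)
  refine ⟨(4 * ω * (4 * Real.sqrt d) ^ d)⁻¹, by positivity, ?_⟩
  intro C'H lam l r x₀ u a J Jη hC hlam _ _ hr hu _ _ hu1 hJQ hQB _ hrl hHarnack hJη hsmall hcard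
  set B := closedBall x₀ r
  set m := ⨍ y in B, u y
  set X := ⋃ j ∈ Jη, unitCube j
  have hXB : X ⊆ B := iUnion₂_subset fun j hj => (hJQ j (hJη hj)).trans hQB
  have huB : IntegrableOn u B := hu.continuousOn.integrableOn_compact (isCompact_closedBall x₀ r)
  have hm : 1 ≤ m := le_setAverage_of_forall_le measurableSet_closedBall
    (measure_closedBall_pos volume x₀ hr).ne' measure_closedBall_lt_top.ne huB fun y _ => hu1 y
  have hXu : ∫ y in X, u y ≤ m / 2 * volume.real X := by
    rw [volume_real_biUnion_unitCube]
    refine setIntegral_biUnion_unitCube_le Jη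
      (fun j hj => huB.mono_set ((subset_biUnion_of_mem hj).trans hXB)) fun j hj => ?_
    obtain ⟨x, hx, hxm⟩ := hsmall j hj
    calc ⨍ y in unitCube j, u y ≤ C'H * u x := hHarnack j (hJη hj) x hx
      _ ≤ C'H * ((2 * C'H)⁻¹ * m) := by gcongr
      _ = m / 2 := by field_simp
  obtain ⟨ξ, hξ, hξm⟩ := exists_one_add_div_mul_setAverage_le measure_closedBall_lt_top.ne hXB
    (measurableSet_biUnion_unitCube Jη) huB (by linarith) hXu
  refine ⟨ξ, hξ.1, le_trans ?_ hξm⟩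
  have hB : volume.real B ≤ (4 * Real.sqrt d * l) ^ d * ω :=
    volume_real_closedBall_le x₀ hr.le hrl
  have hBpos : 0 < volume.real B :=
    ENNReal.toReal_pos (measure_closedBall_pos volume x₀ hr).ne' measure_closedBall_lt_top.ne
  gcongr
  rw [volume_real_biUnion_unitCube, le_div_iff₀ (by positivity)]
  calc (4 * ω * (4 * Real.sqrt d) ^ d)⁻¹ * lam * (2 * volume.real B)
      ≤ (4 * ω * (4 * Real.sqrt d) ^ d)⁻¹ * lam * (2 * ((4 * Real.sqrt d * l) ^ d * ω)) := by
        gcongr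
    _ = lam / 2 * l ^ d := by field_simp; ring
    _ ≤ Jη.card := hcard
end
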